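/- arXiv:2304.09132 — 4 statements merged into one kernel-verified Lean document; each statement's English description precedes it below -/
import Mathlib

section
/- Let E be a finite index set and for each e ∈ E let p_e ∈ (0,1) and r_e ∈ ℝ with -min{(1-p_e)/p_e, p_e/(1-p_e)} ≤ r_e ≤ 1. Let P be the product pmf on ({0,1}×{0,1})^E whose e-th factor is π_{p_e,r_e}, and let Q be the product pmf whose e-th factor is π_{p_e,0}. Then Σ_{ω ∈ ({0,1}×{0,1})^E} P(ω)²/Q(ω) = Π_{e ∈ E} (1 + r_e²). In particular, the second moment E_Q[(P/Q)²] of the likelihood ratio of the correlated pair of inhomogeneous Erdős–Rényi graphs against the independent pair equals Π_{i<j}(1 + R_{ij}²). -/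
/-- The per-edge joint pmf of corresponding edge indicators in a pair of
`R`-correlated Erdős–Rényi graphs with common edge probability `p` and correlation `r`. -/
noncomputable def piCorr (p r : ℝ) : Bool × Bool → ℝ
  | (true, true) => p ^ 2 + r * p * (1 - p)
  | (false, false) => (1 - p) ^ 2 + r * p * (1 - p)
  | _ => p * (1 - p) * (1 - r)


theorem stmt4 {E : Type*} [Fintype E] [DecidableEq E] (p r : E → ℝ)
    (hp : ∀ e, p e ∈ Set.Ioo (0 : ℝ) 1)
    (hr : ∀ e, -(min ((1 - p e) / p e) (p e / (1 - p e))) ≤ r e ∧ r e ≤ 1) :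
    ∑ ω : E → Bool × Bool,
        (∏ e, piCorr (p e) (r e) (ω e)) ^ 2 / ∏ e, piCorr (p e) 0 (ω e) =
      ∏ e, (1 + r e ^ 2) := by
  have key : ∀ e, ∑ b : Bool × Bool,
      (piCorr (p e) (r e) b) ^ 2 / piCorr (p e) 0 b = 1 + r e ^ 2 := by
    intro e
    obtain ⟨hp0, hp1⟩ := hp e
    have h1 : p e ≠ 0 := ne_of_gt hp0
    have h2 : (1 - p e) ≠ 0 := by linarith
    rw [Fintype.sum_prod_type]
    simp only [Fintype.sum_bool, piCorr]
    field_simp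
    ring
  have step : ∀ ω : E → Bool × Bool,
      (∏ e, piCorr (p e) (r e) (ω e)) ^ 2 / ∏ e, piCorr (p e) 0 (ω e) =
      ∏ e, (piCorr (p e) (r e) (ω e)) ^ 2 / piCorr (p e) 0 (ω e) := by
    intro ω
    rw [Finset.prod_div_distrib, Finset.prod_pow]
  simp only [step]
  simp only [← key]
  rw [Finset.prod_univ_sum, Fintype.piFinset_univ]
end

section
/- For each n ∈ ℕ let E_n be a finite index set and for each e ∈ E_n let p_{n,e} ∈ (0,1) and r_{n,e} ∈ ℝ with -min{(1-p_{n,e})/p_{n,e}, p_{n,e}/(1-p_{n,e})} ≤ r_{n,e} ≤ 1. Let P_n be the product pmf on Ω_n = ({0,1}×{0,1})^{E_n} with e-th factor π_{p_{n,e},r_{n,e}} and Q_n the product pmf with e-th factor π_{p_{n,e},0}. If limsup_{n→∞} Σ_{e ∈ E_n} r_{n,e}² < ∞, then for every sequence of subsets S_n ⊆ Ω_n with Q_n(S_n) → 0 as n → ∞, we also have P_n(S_n) → 0. (That is, if limsup_n ‖R_n‖_F < ∞ then the correlated-graph laws are contiguous with respect to the independent-graph laws, so no consistent test of ‖R‖_F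 = 0 against ‖R‖_F > 0 exists.) -/
lemma piCorr_nonneg {p r : ℝ} (hp : p ∈ Set.Ioo (0:ℝ) 1)
    (h1 : -(min ((1 - p) / p) (p / (1 - p))) ≤ r) (h2 : r ≤ 1) (x : Bool × Bool) :
    0 ≤ piCorr p r x := by
  obtain ⟨hp0, hp1⟩ := hp
  have hq : (0:ℝ) < 1 - p := by linarith
  have ha : -(p / (1 - p)) ≤ r := le_trans (neg_le_neg (min_le_right _ _)) h1
  have hb : -((1 - p) / p) ≤ r := le_trans (neg_le_neg (min_le_left _ _)) h1
  have hca : p / (1 - p) * (1 - p) = p := div_mul_cancel₀ _ (ne_of_gt hq)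
  have hcb : (1 - p) / p * p = 1 - p := div_mul_cancel₀ _ (ne_of_gt hp0)
  rcases x with ⟨b1, b2⟩
  rcases b1 <;> rcases b2 <;> simp only [piCorr]
  · have key : 0 ≤ (r + (1 - p) / p) * (p * (1 - p)) :=
      mul_nonneg (by linarith) (by positivity)
    have hexp : (r + (1 - p) / p) * (p * (1 - p)) = r * p * (1 - p) + (1 - p) * (1 - p) := by
      field_simp
    nlinarith [key, hexp]
  · have : (0:ℝ) ≤ 1 - r := by linarith
    positivity
  · have : (0:ℝ) ≤ 1 - r := by linarith
    positivity
  · have key : 0 ≤ (r + p / (1 - p)) * (p * (1 - p)) :=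
      mul_nonneg (by linarith) (by positivity)
    have hexp : (r + p / (1 - p)) * (p * (1 - p)) = r * p * (1 - p) + p * p := by
      field_simp
    nlinarith [key, hexp]

lemma piCorr_zero_pos {p : ℝ} (hp : p ∈ Set.Ioo (0:ℝ) 1) (x : Bool × Bool) :
    0 < piCorr p 0 x := by
  obtain ⟨hp0, hp1⟩ := hp
  have hq : (0:ℝ) < 1 - p := by linarith
  rcases x with ⟨b1, b2⟩
  rcases b1 <;> rcases b2 <;> simp only [piCorr] <;> nlinarith

lemma chiSq {p r : ℝ} (hp : p ∈ Set.Ioo (0:ℝ) 1) :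
    ∑ x : Bool × Bool, (piCorr p r x) ^ 2 / piCorr p 0 x = 1 + r ^ 2 := by
  obtain ⟨hp0, hp1⟩ := hp
  have hq : (0:ℝ) < 1 - p := by linarith
  rw [Fintype.sum_prod_type]
  simp only [Fintype.sum_bool, piCorr]
  field_simp
  ring

theorem stmt6 {E : ℕ → Type*} [∀ n, Fintype (E n)] [∀ n, DecidableEq (E n)]
    (p r : (n : ℕ) → E n → ℝ)
    (hp : ∀ n e, p n e ∈ Set.Ioo (0 : ℝ) 1)
    (hr : ∀ n e, -(min ((1 - p n e) / p n e) (p n e / (1 - p n e))) ≤ r n e ∧ r n e ≤ 1)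
    -- limsup_n Σ_e r_{n,e}² < ∞
    (hbdd : Filter.IsBoundedUnder (· ≤ ·) Filter.atTop (fun n => ∑ e, r n e ^ 2))
    (S : (n : ℕ) → Finset (E n → Bool × Bool))
    -- Q_n(S_n) → 0
    (hQ : Filter.Tendsto (fun n => ∑ ω ∈ S n, ∏ e, piCorr (p n e) 0 (ω e))
      Filter.atTop (nhds 0)) :
    -- P_n(S_n) → 0
    Filter.Tendsto (fun n => ∑ ω ∈ S n, ∏ e, piCorr (p n e) (r n e) (ω e))
      Filter.atTop (nhds 0) := by
  obtain ⟨M, hM⟩ := hbdd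
  rw [Filter.eventually_map] at hM
  have hgt : Filter.Tendsto
      (fun n => Real.sqrt ((∑ ω ∈ S n, ∏ e, piCorr (p n e) 0 (ω e)) * Real.exp M))
      Filter.atTop (nhds 0) := by
    have := (hQ.mul_const (Real.exp M)).sqrt
    simpa using this
  refine squeeze_zero' ?_ ?_ hgt
  · filter_upwards with n
    exact Finset.sum_nonneg fun ω _ => Finset.prod_nonneg fun e _ =>
      piCorr_nonneg (hp n e) (hr n e).1 (hr n e).2 _
  · filter_upwards [hM] with n hn
    set P := ∑ ω ∈ S n, ∏ e, piCorr (p n e) (r n e) (ω e) with hPdef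
    set Q := ∑ ω ∈ S n, ∏ e, piCorr (p n e) 0 (ω e) with hQdef
    have hQωpos : ∀ ω : E n → Bool × Bool, 0 < ∏ e, piCorr (p n e) 0 (ω e) :=
      fun ω => Finset.prod_pos fun e _ => piCorr_zero_pos (hp n e) _
    have hPnn : 0 ≤ P := Finset.sum_nonneg fun ω _ => Finset.prod_nonneg fun e _ =>
      piCorr_nonneg (hp n e) (hr n e).1 (hr n e).2 _
    have hQnn : 0 ≤ Q := Finset.sum_nonneg fun ω _ => (hQωpos ω).le
    have hCS : P ^ 2 ≤ Q * ∑ ω ∈ S n,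
        (∏ e, piCorr (p n e) (r n e) (ω e)) ^ 2 / ∏ e, piCorr (p n e) 0 (ω e) := by
      have key := Finset.sum_mul_sq_le_sq_mul_sq (S n)
        (fun ω => Real.sqrt (∏ e, piCorr (p n e) 0 (ω e)))
        (fun ω => (∏ e, piCorr (p n e) (r n e) (ω e)) /
          Real.sqrt (∏ e, piCorr (p n e) 0 (ω e)))
      have e1 : ∀ ω ∈ S n, Real.sqrt (∏ e, piCorr (p n e) 0 (ω e)) *
          ((∏ e, piCorr (p n e) (r n e) (ω e)) / Real.sqrt (∏ e, piCorr (p n e) 0 (ω e)))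
          = ∏ e, piCorr (p n e) (r n e) (ω e) := by
        intro ω _
        rw [mul_comm, div_mul_cancel₀]
        exact Real.sqrt_ne_zero'.2 (hQωpos ω)
      have e2 : ∀ ω ∈ S n, (Real.sqrt (∏ e, piCorr (p n e) 0 (ω e))) ^ 2
          = ∏ e, piCorr (p n e) 0 (ω e) := fun ω _ => Real.sq_sqrt (hQωpos ω).le
      have e3 : ∀ ω ∈ S n, ((∏ e, piCorr (p n e) (r n e) (ω e)) /
          Real.sqrt (∏ e, piCorr (p n e) 0 (ω e))) ^ 2
          = (∏ e, piCorr (p n e) (r n e) (ω e)) ^ 2 / ∏ e, piCorr (p n e) 0 (ω e) := by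
        intro ω _
        rw [div_pow, Real.sq_sqrt (hQωpos ω).le]
      rw [Finset.sum_congr rfl e1, Finset.sum_congr rfl e2, Finset.sum_congr rfl e3] at key
      exact key
    have hchi : ∑ ω ∈ S n,
        (∏ e, piCorr (p n e) (r n e) (ω e)) ^ 2 / ∏ e, piCorr (p n e) 0 (ω e)
        ≤ Real.exp M := by
      have h1 : ∑ ω ∈ S n,
          (∏ e, piCorr (p n e) (r n e) (ω e)) ^ 2 / ∏ e, piCorr (p n e) 0 (ω e)
          ≤ ∑ ω : E n → Bool × Bool,
            (∏ e, piCorr (p n e) (r n e) (ω e)) ^ 2 / ∏ e, piCorr (p n e) 0 (ω e) :=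
        Finset.sum_le_sum_of_subset_of_nonneg (Finset.subset_univ _)
          (fun ω _ _ => div_nonneg (sq_nonneg _) (hQωpos ω).le)
      have h2 : ∑ ω : E n → Bool × Bool,
          (∏ e, piCorr (p n e) (r n e) (ω e)) ^ 2 / ∏ e, piCorr (p n e) 0 (ω e)
          = ∏ e, (1 + r n e ^ 2) := by
        have hsplit : ∀ ω : E n → Bool × Bool,
            (∏ e, piCorr (p n e) (r n e) (ω e)) ^ 2 / ∏ e, piCorr (p n e) 0 (ω e)
            = ∏ e, (piCorr (p n e) (r n e) (ω e)) ^ 2 / piCorr (p n e) 0 (ω e) := by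
          intro ω
          rw [← Finset.prod_pow, ← Finset.prod_div_distrib]
        simp_rw [hsplit]
        rw [← Fintype.piFinset_univ, Finset.sum_prod_piFinset Finset.univ
          (fun e x => piCorr (p n e) (r n e) x ^ 2 / piCorr (p n e) 0 x)]
        exact Finset.prod_congr rfl fun e _ => chiSq (hp n e)
      have h3 : ∏ e, (1 + r n e ^ 2) ≤ Real.exp (∑ e, r n e ^ 2) := by
        rw [Real.exp_sum]
        exact Finset.prod_le_prod (fun e _ => by positivity)
          (fun e _ => by linarith [Real.add_one_le_exp (r n e ^ 2)])
      have h4 : Real.exp (∑ e, r n e ^ 2) ≤ Real.exp M := Real.exp_le_exp.2 hn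
      calc _ ≤ _ := h1
        _ = _ := h2
        _ ≤ _ := h3
        _ ≤ _ := h4
    calc P = Real.sqrt (P ^ 2) := (Real.sqrt_sq hPnn).symm
      _ ≤ Real.sqrt (Q * Real.exp M) := Real.sqrt_le_sqrt
          (hCS.trans (mul_le_mul_of_nonneg_left hchi hQnn))
end

section
/- Let ε ∈ [0,1]. Then (1/2)·π_{1/2,ε}(a,b) + (1/2)·π_{1/2,−ε}(a,b) = 1/4 for every (a,b) ∈ {0,1}×{0,1}. Consequently, if E is a finite index set and the r_e are independent random signs taking values ±ε with probability 1/2 each, the marginal (mixed over the r_e) joint pmf of the product of the π_{1/2,r_e} over e ∈ E equals the product of the π_{1/2,0}, i.e., equals the pmf under which all coordinates are independent Bernoulli(1/2); hence the distribution of the observed graph pair is the same under ε = 0 and under ε > 0. -/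
lemma piCorr_mix (ε : ℝ) (ab : Bool × Bool) :
    (1 / 2) * piCorr (1 / 2) ε ab + (1 / 2) * piCorr (1 / 2) (-ε) ab = 1 / 4 := by
  rcases ab with ⟨a, b⟩
  cases a <;> cases b <;> simp [piCorr] <;> ring

lemma piCorr_zero (ab : Bool × Bool) : piCorr (1 / 2) 0 ab = 1 / 4 := by
  rcases ab with ⟨a, b⟩
  cases a <;> cases b <;> simp [piCorr] <;> norm_num

theorem stmt12 (ε : ℝ) (hε : ε ∈ Set.Icc (0 : ℝ) 1) :
    (∀ ab : Bool × Bool,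
      (1 / 2) * piCorr (1 / 2) ε ab + (1 / 2) * piCorr (1 / 2) (-ε) ab = 1 / 4) ∧
    (∀ (E : Type) [Fintype E] [DecidableEq E] (ω : E → Bool × Bool),
      ∑ σ : E → Bool,
          (1 / 2 : ℝ) ^ Fintype.card E * ∏ e, piCorr (1 / 2) (if σ e then ε else -ε) (ω e) =
        ∏ e : E, piCorr (1 / 2) 0 (ω e)) := by
  refine ⟨piCorr_mix ε, ?_⟩
  intro E _ _ ω
  have key : ∀ σ : E → Bool,
      (1 / 2 : ℝ) ^ Fintype.card E * ∏ e, piCorr (1 / 2) (if σ e then ε else -ε) (ω e)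
        = ∏ e, (1 / 2 : ℝ) * piCorr (1 / 2) (if σ e then ε else -ε) (ω e) := by
    intro σ
    rw [Finset.prod_mul_distrib, Finset.prod_const, Finset.card_univ]
  simp_rw [key]
  rw [← Fintype.piFinset_univ,
    ← Finset.prod_univ_sum (fun _ => (Finset.univ : Finset Bool))
      (fun e b => (1 / 2 : ℝ) * piCorr (1 / 2) (if b then ε else -ε) (ω e))]
  refine Finset.prod_congr rfl fun e _ => ?_
  rw [piCorr_zero]
  have := piCorr_mix ε (ω e)
  simp [Fintype.sum_bool]
  linarith
end

section
/- Let p, q ∈ (0,1) and r ∈ ℝ, and set s = √(p(1−p)q(1−q)). All four values π_{p,q,r}(1,1), π_{p,q,r}(1,0), π_{p,q,r}(0,1), π_{p,q,r}(0,0) are nonnegative and sum to 1 (i.e., π_{p,q,r} is a probability mass function on {0,1}×{0,1}) if and only if −min{ (pq/((1−p)(1−q)))^{1/2}, (((1−p)(1−q))/(pq))^{1/2} } ≤ r ≤ min{ (p(1−q)/(q(1−p)))^{1/2}, (q(1−p)/(p(1−q)))^{1/2} }. -/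
/-- The per-edge joint pmf for a pair of `R`-correlated inhomogeneous Erdős–Rényi graphs
with different marginal edge probabilities `p` and `q` and correlation `r`. -/
noncomputable def piCorr2 (p q r : ℝ) : Bool × Bool → ℝ
  | (true, true) => p * q + r * Real.sqrt (p * (1 - p) * q * (1 - q))
  | (true, false) => p * (1 - q) - r * Real.sqrt (p * (1 - p) * q * (1 - q))
  | (false, true) => (1 - p) * q - r * Real.sqrt (p * (1 - p) * q * (1 - q))
  | (false, false) => (1 - p) * (1 - q) + r * Real.sqrt (p * (1 - p) * q * (1 - q))

/-! The masses always sum to `1`, and with `s = √(p(1-p)q(1-q))` each square root in the bound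
equals a cell's product mass divided by `s` (`√(x / y) = x / √(x y)`). So the four inequalities
in the bound are exactly the nonnegativity of the four cells `x ± r s`. -/

theorem Real.sqrt_div_eq_div_sqrt_mul {x y : ℝ} (hx : 0 ≤ x) :
    √(x / y) = x / √(x * y) := by
  rcases hx.eq_or_lt with rfl | hx
  · simp
  rw [Real.sqrt_div hx.le, Real.sqrt_mul hx.le, ← mul_div_mul_left (√x) (√y)
    (Real.sqrt_pos.2 hx).ne', Real.mul_self_sqrt hx.le]

theorem piCorr2_sum_eq_one (p q r : ℝ) : ∑ ab : Bool × Bool, piCorr2 p q r ab = 1 := by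
  simp only [Fintype.sum_prod_type, Fintype.sum_bool, piCorr2]
  ring

theorem piCorr2_nonneg_iff {p q r : ℝ} (hs : 0 < p * (1 - p) * q * (1 - q)) :
    (∀ ab : Bool × Bool, 0 ≤ piCorr2 p q r ab) ↔
      -(min (p * q / √(p * (1 - p) * q * (1 - q)))
          ((1 - p) * (1 - q) / √(p * (1 - p) * q * (1 - q)))) ≤ r ∧
        r ≤ min (p * (1 - q) / √(p * (1 - p) * q * (1 - q)))
          (q * (1 - p) / √(p * (1 - p) * q * (1 - q))) := by
  have hs' := Real.sqrt_pos.2 hs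
  simp only [Prod.forall, Bool.forall_bool, piCorr2, neg_le, le_min_iff, le_div_iff₀ hs']
  constructor
  · rintro ⟨⟨h00, h01⟩, h10, h11⟩
    exact ⟨⟨by linarith, by linarith⟩, by linarith, by linarith⟩
  · rintro ⟨⟨h11, h00⟩, h10, h01⟩
    exact ⟨⟨by linarith, by linarith⟩, by linarith, by linarith⟩

theorem stmt14 (p q r : ℝ) (hp : p ∈ Set.Ioo (0 : ℝ) 1) (hq : q ∈ Set.Ioo (0 : ℝ) 1) :
    ((∀ ab : Bool × Bool, 0 ≤ piCorr2 p q r ab) ∧ ∑ ab : Bool × Bool, piCorr2 p q r ab = 1) ↔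
      (-(min (Real.sqrt (p * q / ((1 - p) * (1 - q))))
            (Real.sqrt ((1 - p) * (1 - q) / (p * q)))) ≤ r ∧
        r ≤ min (Real.sqrt (p * (1 - q) / (q * (1 - p))))
            (Real.sqrt (q * (1 - p) / (p * (1 - q))))) := by
  obtain ⟨hp0, hp1⟩ := hp
  obtain ⟨hq0, hq1⟩ := hq
  have hp1' : 0 < 1 - p := sub_pos.2 hp1
  have hq1' : 0 < 1 - q := sub_pos.2 hq1
  have hsqrt (x y : ℝ) (hx : 0 < x) (hxy : x * y = p * (1 - p) * q * (1 - q)) :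
      √(x / y) = x / √(p * (1 - p) * q * (1 - q)) :=
    hxy ▸ Real.sqrt_div_eq_div_sqrt_mul hx.le
  rw [hsqrt (p * q) _ (mul_pos hp0 hq0) (by ring),
    hsqrt ((1 - p) * (1 - q)) _ (mul_pos hp1' hq1') (by ring),
    hsqrt (p * (1 - q)) _ (mul_pos hp0 hq1') (by ring),
    hsqrt (q * (1 - p)) _ (mul_pos hq0 hp1') (by ring),
    piCorr2_nonneg_iff (by positivity), and_iff_left (piCorr2_sum_eq_one p q r)]
end
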